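/- arXiv:2603.01799 — 3 statements merged into one kernel-verified Lean document; each statement's English description precedes it below -/
import Mathlib

section
/- Removing the oldest ABox preserves canonical window models: if {I₁, ..., Iₙ} is the canonical window model of the window W = {A_{t₁}, ..., A_{tₙ}} (constructed by adding the canonical model of each new ABox and, whenever a rule body is satisfied by a minimal set of component interpretations, adding the rule head to the component interpretation with the smallest index among those used), then {I₂, ..., Iₙ} is the canonical window model of W \ {A_{t₁}}. -/
/-- A role name or its inverse. -/
inductive RoleE (R : Type) where
  | name : R → RoleE R
  | inv : R → RoleE R

/-- RL rule bodies: concept names, conjunction, and existential restriction. -/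
inductive Body (C R : Type) where
  | atom : C → Body C R
  | inter : Body C R → Body C R → Body C R
  | ex : RoleE R → Body C R → Body C R

/-- RL TBox rules: B ⊑ A, B ⊑ ⊥, and role inclusions R₁ ⊑ R₂. -/
inductive Rule (C R : Type) where
  | conc : Body C R → C → Rule C R
  | bot : Body C R → Rule C R
  | rinc : RoleE R → RoleE R → Rule C R

structure Interp (C R D : Type) where
  con : C → Set D
  rol : R → Set (D × D)

def Interp.evalRole {C R D : Type} (I : Interp C R D) : RoleE R → Set (D × D)
  | .name r => I.rol r
  | .inv r => {p | (p.2, p.1) ∈ I.rol r}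

def Interp.eval {C R D : Type} (I : Interp C R D) : Body C R → Set D
  | .atom c => I.con c
  | .inter b1 b2 => I.eval b1 ∩ I.eval b2
  | .ex ρ b => {x | ∃ y, y ∈ I.eval b ∧ (x, y) ∈ I.evalRole ρ}

inductive Assertion (C R D : Type) where
  | conc : C → D → Assertion C R D
  | role : R → D → D → Assertion C R D

def Interp.satA {C R D : Type} (I : Interp C R D) : Assertion C R D → Prop
  | .conc c a => a ∈ I.con c
  | .role r a b => (a, b) ∈ I.rol r

def Interp.modelsA {C R D : Type} (I : Interp C R D) (A : Set (Assertion C R D)) : Prop :=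
  ∀ φ ∈ A, I.satA φ

def Interp.satRule {C R D : Type} (I : Interp C R D) : Rule C R → Prop
  | .conc B A => I.eval B ⊆ I.con A
  | .bot B => I.eval B = ∅
  | .rinc ρ1 ρ2 => I.evalRole ρ1 ⊆ I.evalRole ρ2

def Interp.modelsT {C R D : Type} (I : Interp C R D) (T : List (Rule C R)) : Prop :=
  ∀ r ∈ T, I.satRule r

/-- Pointwise containment of interpretations. -/
def Interp.le {C R D : Type} (I J : Interp C R D) : Prop :=
  (∀ c, I.con c ⊆ J.con c) ∧ ∀ r, I.rol r ⊆ J.rol r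

/-- The canonical (least) model of an ABox w.r.t. a TBox. -/
def IsCanon {C R D : Type} (T : List (Rule C R)) (A : Set (Assertion C R D))
    (I : Interp C R D) : Prop :=
  I.modelsA A ∧ I.modelsT T ∧ ∀ J : Interp C R D, J.modelsA A → J.modelsT T → I.le J

/-- Direct sum of a list of interpretations. -/
def dsumList {C R D : Type} (l : List (Interp C R D)) : Interp C R D :=
  ⟨fun c => {x | ∃ I ∈ l, x ∈ I.con c}, fun r => {p | ∃ I ∈ l, p ∈ I.rol r}⟩

/-- Direct sum of the components of `l` indexed by a set `S` of positions. -/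
def dsumOver {C R D : Type} (l : List (Interp C R D)) (S : Finset (Fin l.length)) :
    Interp C R D :=
  ⟨fun c => {x | ∃ i ∈ S, x ∈ (l.get i).con c}, fun r => {p | ∃ i ∈ S, p ∈ (l.get i).rol r}⟩

def Interp.addCon {C R D : Type} (I : Interp C R D) (A : C) (x : D) : Interp C R D :=
  ⟨fun c => I.con c ∪ {x' | c = A ∧ x' = x}, I.rol⟩

def RoleE.base {R : Type} : RoleE R → R
  | .name r => r
  | .inv r => r

def RoleE.orient {R D : Type} : RoleE R → D × D → D × D
  | .name _, p => p
  | .inv _, p => (p.2, p.1)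

def Interp.addRole {C R D : Type} (I : Interp C R D) (ρ : RoleE R) (p : D × D) :
    Interp C R D :=
  ⟨I.con, fun r => I.rol r ∪ {q | r = ρ.base ∧ q = ρ.orient p}⟩

def updAt {C R D : Type} (l : List (Interp C R D)) (i : ℕ)
    (f : Interp C R D → Interp C R D) : List (Interp C R D) :=
  l.mapIdx (fun j I => if j = i then f I else I)

/-- One step of the canonical window model construction: some rule head, derivable
from a minimal set S of components, is added to the component with the smallest
(i.e. oldest) index occurring in S. -/
def Step {C R D : Type} (T : List (Rule C R)) (l l' : List (Interp C R D)) : Prop :=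
  (∃ B A, Rule.conc B A ∈ T ∧ ∃ S : Finset (Fin l.length), ∃ hS : S.Nonempty, ∃ x : D,
      x ∈ (dsumOver l S).eval B ∧
      (∀ S' : Finset (Fin l.length), S' ⊂ S → x ∉ (dsumOver l S').eval B) ∧
      x ∉ (l.get (S.min' hS)).con A ∧
      l' = updAt l (S.min' hS) (fun I => I.addCon A x)) ∨
  (∃ ρ1 ρ2, Rule.rinc ρ1 ρ2 ∈ T ∧ ∃ S : Finset (Fin l.length), ∃ hS : S.Nonempty,
      ∃ p : D × D,
      p ∈ (dsumOver l S).evalRole ρ1 ∧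
      (∀ S' : Finset (Fin l.length), S' ⊂ S → p ∉ (dsumOver l S').evalRole ρ1) ∧
      p ∉ (l.get (S.min' hS)).evalRole ρ2 ∧
      l' = updAt l (S.min' hS) (fun I => I.addRole ρ2 p))

def Saturated {C R D : Type} (T : List (Rule C R)) (l : List (Interp C R D)) : Prop :=
  ¬ ∃ l', Step T l l'

/-- Adding a new (already canonically materialized) component and closing under `Step`. -/
def AddAbox {C R D : Type} (T : List (Rule C R)) (l : List (Interp C R D))
    (In : Interp C R D) (l' : List (Interp C R D)) : Prop :=
  Relation.ReflTransGen (Step T) (l ++ [In]) l' ∧ Saturated T l'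

/-- The canonical window model of a window (list of ABoxes in timestamp order). -/
inductive IsCWM {C R D : Type} (T : List (Rule C R)) :
    List (Set (Assertion C R D)) → List (Interp C R D) → Prop where
  | nil : IsCWM T [] []
  | snoc {As ls A In l'} : IsCWM T As ls → IsCanon T A In → AddAbox T ls In l' →
      IsCWM T (As ++ [A]) l'

section Helpers

variable {C R D : Type}

def feS (n : ℕ) : Fin n ↪ Fin (n+1) := ⟨Fin.succ, Fin.succ_injective n⟩

lemma dsum_cons (J : Interp C R D) (l : List (Interp C R D))
    (S : Finset (Fin l.length)) :
    dsumOver (J::l) (S.map (feS l.length)) = dsumOver l S := by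
  unfold dsumOver
  congr 1 <;> funext c <;> ext x <;>
    simp only [Finset.mem_map, feS, Function.Embedding.coeFn_mk, Set.mem_setOf_eq] <;>
    constructor
  · rintro ⟨i, ⟨j, hj, rfl⟩, hx⟩; exact ⟨j, hj, hx⟩
  · rintro ⟨j, hj, hx⟩; exact ⟨j.succ, ⟨j, hj, rfl⟩, hx⟩
  · rintro ⟨i, ⟨j, hj, rfl⟩, hx⟩; exact ⟨j, hj, hx⟩
  · rintro ⟨j, hj, hx⟩; exact ⟨j.succ, ⟨j, hj, rfl⟩, hx⟩

lemma min'_map_feS {n : ℕ} (S : Finset (Fin n)) (hS : S.Nonempty) (hS' : (S.map (feS n)).Nonempty) :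
    (S.map (feS n)).min' hS' = Fin.succ (S.min' hS) := by
  apply le_antisymm
  · exact Finset.min'_le _ _ (Finset.mem_map_of_mem _ (S.min'_mem hS))
  · apply Finset.le_min'
    rintro y hy
    rcases Finset.mem_map.mp hy with ⟨z, hz, rfl⟩
    exact Fin.succ_le_succ_iff.mpr (Finset.min'_le _ _ hz)

lemma mapIdx_id' {α : Type*} (g : ℕ → α → α) (hg : ∀ i a, g i a = a) (l : List α) :
    List.mapIdx g l = l := by
  induction l generalizing g with
  | nil => rfl
  | cons a l ih => rw [List.mapIdx_cons, hg, ih _ (fun i a => hg _ _)]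

lemma mapIdx_congr' {α β : Type*} (g g' : ℕ → α → β) (hg : ∀ i a, g i a = g' i a)
    (l : List α) : List.mapIdx g l = List.mapIdx g' l := by
  induction l generalizing g g' with
  | nil => rfl
  | cons a l ih => rw [List.mapIdx_cons, List.mapIdx_cons, hg, ih _ _ (fun i a => hg _ _)]

lemma updAt_cons_zero (J : Interp C R D) (l : List (Interp C R D)) (f) :
    updAt (J::l) 0 f = f J :: l := by
  unfold updAt
  rw [List.mapIdx_cons]
  simp only [if_pos rfl]
  congr 1
  exact mapIdx_id' _ (fun i a => by simp) l

lemma updAt_cons_succ (J : Interp C R D) (l : List (Interp C R D)) (k : ℕ) (f) :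
    updAt (J::l) (k+1) f = J :: updAt l k f := by
  unfold updAt
  rw [List.mapIdx_cons]
  simp only [Nat.succ_ne_zero, if_neg (Nat.zero_ne_add_one k)]
  congr 1
  exact mapIdx_congr' _ _ (fun i a => by simp) l

lemma updAt_length (l : List (Interp C R D)) (i : ℕ) (f) :
    (updAt l i f).length = l.length := List.length_mapIdx

lemma step_length {T : List (Rule C R)} {l l' : List (Interp C R D)}
    (h : Step T l l') : l'.length = l.length := by
  rcases h with ⟨B, A, _, S, hS, x, _, _, _, rfl⟩ | ⟨ρ1, ρ2, _, S, hS, p, _, _, _, rfl⟩ <;>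
    exact updAt_length _ _ _

lemma rtg_length {T : List (Rule C R)} {l l' : List (Interp C R D)}
    (h : Relation.ReflTransGen (Step T) l l') : l'.length = l.length := by
  induction h with
  | refl => rfl
  | tail _ hs ih => rw [step_length hs, ih]

end Helpers

section Helpers2

variable {C R D : Type}

lemma decompose_map {n : ℕ} (S : Finset (Fin (n+1))) (h0 : ∀ x ∈ S, (x : ℕ) ≠ 0) :
    ∃ T : Finset (Fin n), S = T.map (feS n) := by
  have hsub : S ⊆ Finset.univ.map (feS n) := by
    intro x hx
    rcases Fin.exists_succ_eq.mpr (fun (h : x = 0) => h0 x hx (by rw [h]; rfl)) with ⟨y, rfl⟩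
    exact Finset.mem_map_of_mem _ (Finset.mem_univ y)
  rcases Finset.subset_map_iff.mp hsub with ⟨u, _, hu⟩
  exact ⟨u, hu⟩

lemma step_lift (T : List (Rule C R)) (J : Interp C R D) {l l2 : List (Interp C R D)}
    (h : Step T l l2) : Step T (J::l) (J::l2) := by
  rcases h with ⟨B, A, hmem, S, hS, x, hx, hmin, hno, rfl⟩ |
    ⟨ρ1, ρ2, hmem, S, hS, p, hp, hmin, hno, rfl⟩
  · refine Or.inl ⟨B, A, hmem, S.map (feS l.length), Finset.map_nonempty.mpr hS, x, ?_, ?_, ?_, ?_⟩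
    · rw [dsum_cons]; exact hx
    · intro S'' hsub
      have h0 : ∀ x ∈ S'', (x : ℕ) ≠ 0 := by
        intro x hx
        rcases Finset.mem_map.mp (hsub.1 hx) with ⟨z, _, rfl⟩
        exact Nat.succ_ne_zero z
      rcases decompose_map S'' h0 with ⟨T'', rfl⟩
      rw [dsum_cons]
      exact hmin T'' (Finset.map_ssubset_map.mp hsub)
    · rw [min'_map_feS S hS]; exact hno
    · rw [min'_map_feS S hS]
      exact (updAt_cons_succ J l _ _).symm
  · refine Or.inr ⟨ρ1, ρ2, hmem, S.map (feS l.length), Finset.map_nonempty.mpr hS, p, ?_, ?_, ?_, ?_⟩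
    · rw [dsum_cons]; exact hp
    · intro S'' hsub
      have h0 : ∀ x ∈ S'', (x : ℕ) ≠ 0 := by
        intro x hx
        rcases Finset.mem_map.mp (hsub.1 hx) with ⟨z, _, rfl⟩
        exact Nat.succ_ne_zero z
      rcases decompose_map S'' h0 with ⟨T'', rfl⟩
      rw [dsum_cons]
      exact hmin T'' (Finset.map_ssubset_map.mp hsub)
    · rw [min'_map_feS S hS]; exact hno
    · rw [min'_map_feS S hS]
      exact (updAt_cons_succ J l _ _).symm

lemma step_proj (T : List (Rule C R)) (J : Interp C R D) {l l'' : List (Interp C R D)}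
    (h : Step T (J::l) l'') :
    (∃ J', l'' = J' :: l) ∨ (∃ l2, Step T l l2 ∧ l'' = J :: l2) := by
  rcases h with ⟨B, A, hmem, S, hS, x, hx, hmin, hno, rfl⟩ |
    ⟨ρ1, ρ2, hmem, S, hS, p, hp, hmin, hno, rfl⟩
  · by_cases h0 : (⟨0, Nat.succ_pos l.length⟩ : Fin (J :: l).length) ∈ S
    · have hm : ((S.min' hS : Fin (J :: l).length) : ℕ) = 0 :=
        Nat.le_antisymm (Finset.min'_le _ _ h0) (Nat.zero_le _)
      left
      rw [hm]
      exact ⟨_, updAt_cons_zero J l _⟩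
    · have h0' : ∀ x ∈ S, (x : ℕ) ≠ 0 := by
        intro x hx hv
        exact h0 (by rwa [show x = ⟨0, Nat.succ_pos l.length⟩ from Fin.ext hv] at hx)
      rcases decompose_map S h0' with ⟨T', rfl⟩
      have hT : T'.Nonempty := Finset.map_nonempty.mp hS
      right
      refine ⟨updAt l (T'.min' hT) (fun I => I.addCon A x),
        Or.inl ⟨B, A, hmem, T', hT, x, ?_, ?_, ?_, rfl⟩, ?_⟩
      · rw [dsum_cons] at hx; exact hx
      · intro S'' hsub
        have := hmin (S''.map (feS l.length)) (Finset.map_ssubset_map.mpr hsub)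
        rw [dsum_cons] at this; exact this
      · rw [min'_map_feS T' hT] at hno; exact hno
      · rw [min'_map_feS T' hT]
        exact updAt_cons_succ J l _ _
  · by_cases h0 : (⟨0, Nat.succ_pos l.length⟩ : Fin (J :: l).length) ∈ S
    · have hm : ((S.min' hS : Fin (J :: l).length) : ℕ) = 0 :=
        Nat.le_antisymm (Finset.min'_le _ _ h0) (Nat.zero_le _)
      left
      rw [hm]
      exact ⟨_, updAt_cons_zero J l _⟩
    · have h0' : ∀ x ∈ S, (x : ℕ) ≠ 0 := by
        intro x hx hv
        exact h0 (by rwa [show x = ⟨0, Nat.succ_pos l.length⟩ from Fin.ext hv] at hx)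
      rcases decompose_map S h0' with ⟨T', rfl⟩
      have hT : T'.Nonempty := Finset.map_nonempty.mp hS
      right
      refine ⟨updAt l (T'.min' hT) (fun I => I.addRole ρ2 p),
        Or.inr ⟨ρ1, ρ2, hmem, T', hT, p, ?_, ?_, ?_, rfl⟩, ?_⟩
      · rw [dsum_cons] at hp; exact hp
      · intro S'' hsub
        have := hmin (S''.map (feS l.length)) (Finset.map_ssubset_map.mpr hsub)
        rw [dsum_cons] at this; exact this
      · rw [min'_map_feS T' hT] at hno; exact hno
      · rw [min'_map_feS T' hT]
        exact updAt_cons_succ J l _ _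

lemma rtg_proj (T : List (Rule C R)) (J : Interp C R D) {l m : List (Interp C R D)}
    (h : Relation.ReflTransGen (Step T) (J :: l) m) :
    ∃ J' l2, m = J' :: l2 ∧ Relation.ReflTransGen (Step T) l l2 := by
  induction h with
  | refl => exact ⟨J, l, rfl, Relation.ReflTransGen.refl⟩
  | tail _ hs ih =>
    rcases ih with ⟨J', l2, rfl, hr⟩
    rcases step_proj T J' hs with ⟨J'', rfl⟩ | ⟨l3, hstep, rfl⟩
    · exact ⟨J'', l2, rfl, hr⟩
    · exact ⟨J', l3, rfl, hr.tail hstep⟩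

lemma saturated_tail (T : List (Rule C R)) (J : Interp C R D) {l : List (Interp C R D)}
    (h : Saturated T (J :: l)) : Saturated T l := by
  rintro ⟨l2, hl2⟩
  exact h ⟨J :: l2, step_lift T J hl2⟩

end Helpers2

section Helpers3

variable {C R D : Type}

lemma isCWM_length {T : List (Rule C R)} {W : List (Set (Assertion C R D))}
    {M : List (Interp C R D)} (h : IsCWM T W M) : M.length = W.length := by
  induction h with
  | nil => rfl
  | snoc _ _ hadd ih =>
    rw [rtg_length hadd.1]
    simp [ih]

lemma isCWM_tail {T : List (Rule C R)} {W : List (Set (Assertion C R D))}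
    {M : List (Interp C R D)} (h : IsCWM T W M) :
    ∀ (A0 : Set (Assertion C R D)) As (I0 : Interp C R D) Is,
      W = A0 :: As → M = I0 :: Is → IsCWM T As Is := by
  induction h with
  | nil => intro A0 As I0 Is hW _; exact absurd hW (by simp)
  | @snoc As' ls A In l' hprev hcanon hadd ih =>
    intro A0 Bs I0 Is hW hM
    subst hM
    cases As' with
    | nil =>
      simp at hW
      obtain ⟨rfl, rfl⟩ := hW
      have hls : ls.length = 0 := isCWM_length hprev
      have hlen : (I0 :: Is).length = (ls ++ [In]).length := rtg_length hadd.1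
      simp [hls] at hlen
      subst hlen
      exact IsCWM.nil
    | cons A0' As'' =>
      injection hW with h1 h2
      subst h1; subst h2
      have hlen : ls.length = (A0' :: As'').length := isCWM_length hprev
      cases ls with
      | nil => simp at hlen
      | cons J0 Js =>
        have hih : IsCWM T As'' Js := ih A0' As'' J0 Js rfl rfl
        have hr : Relation.ReflTransGen (Step T) (J0 :: (Js ++ [In])) (I0 :: Is) := hadd.1
        rcases rtg_proj T J0 hr with ⟨J', l2, heq, hr2⟩
        obtain ⟨rfl, rfl⟩ : J' = I0 ∧ l2 = Is := by
          injection heq.symm with h1 h2; exact ⟨h1, h2⟩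
        exact IsCWM.snoc hih hcanon ⟨hr2, saturated_tail T _ hadd.2⟩

end Helpers3

/-- removing the oldest ABox preserves canonical window models:
if {I₀, I₁, ..., Iₙ} is the canonical window model of the (consistent) window
{A₀, A₁, ..., Aₙ}, then {I₁, ..., Iₙ} is the canonical window model of the window
with the oldest ABox A₀ removed. -/
theorem cwm_drop_oldest {C R D : Type} (T : List (Rule C R))
    (A0 : Set (Assertion C R D)) (As : List (Set (Assertion C R D)))
    (I0 : Interp C R D) (Is : List (Interp C R D))
    (hcons : ∃ M : Interp C R D,
      M.modelsA (A0 ∪ {φ | ∃ A ∈ As, φ ∈ A}) ∧ M.modelsT T)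
    (h : IsCWM T (A0 :: As) (I0 :: Is)) :
    IsCWM T As Is :=
  isCWM_tail h A0 As I0 Is rfl rfl
end

section
/- The canonical window model construction yields the canonical model of the window ABox: the direct sum ⊕ᵢ Iᵢ of the components of the canonical window model of W = {A_{t₁},...,A_{tₙ}} equals the canonical (least) model of the window ABox A_W = ⋃ᵢ A_{tᵢ} with respect to the TBox T. -/
section AuxLemmas

variable {C R D : Type}

lemma Interp.le_trans' {I J K : Interp C R D} (h1 : I.le J) (h2 : J.le K) : I.le K :=
  ⟨fun c => (h1.1 c).trans (h2.1 c), fun r => (h1.2 r).trans (h2.2 r)⟩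

lemma Interp.evalRole_mono {I J : Interp C R D} (h : I.le J) (ρ : RoleE R) :
    I.evalRole ρ ⊆ J.evalRole ρ := by
  cases ρ with
  | name r => exact h.2 r
  | inv r => intro p hp; exact h.2 r hp

lemma Interp.eval_mono {I J : Interp C R D} (h : I.le J) : ∀ B : Body C R, I.eval B ⊆ J.eval B
  | .atom c => h.1 c
  | .inter b1 b2 => fun x hx => ⟨eval_mono h b1 hx.1, eval_mono h b2 hx.2⟩
  | .ex ρ b => fun x hx => by
      obtain ⟨y, hy, hr⟩ := hx
      exact ⟨y, eval_mono h b hy, evalRole_mono h ρ hr⟩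

lemma Interp.satA_mono {I J : Interp C R D} (h : I.le J) {φ : Assertion C R D}
    (hφ : I.satA φ) : J.satA φ := by
  cases φ with
  | conc c a => exact h.1 c hφ
  | role r a b => exact h.2 r hφ

lemma Interp.mem_evalRole_iff (I : Interp C R D) (ρ : RoleE R) (p : D × D) :
    p ∈ I.evalRole ρ ↔ ρ.orient p ∈ I.rol ρ.base := by
  cases ρ <;> rfl

lemma Interp.evalRole_empty {I : Interp C R D} (hr : ∀ r, I.rol r = ∅) (ρ : RoleE R) :
    I.evalRole ρ = ∅ := by
  cases ρ with
  | name r => exact hr r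
  | inv r => ext p; simp [Interp.evalRole, hr r]

lemma Interp.eval_empty {I : Interp C R D} (hc : ∀ c, I.con c = ∅) (hr : ∀ r, I.rol r = ∅) :
    ∀ B : Body C R, I.eval B = ∅
  | .atom c => hc c
  | .inter b1 b2 => by
      rw [show I.eval (.inter b1 b2) = I.eval b1 ∩ I.eval b2 from rfl,
        eval_empty hc hr b1]
      simp
  | .ex ρ b => by
      ext x
      simp only [Interp.eval, Set.mem_setOf_eq, Set.mem_empty_iff_false, iff_false]
      rintro ⟨y, _, hrr⟩
      rw [Interp.evalRole_empty hr ρ] at hrr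
      exact hrr

lemma get_mem' {l : List (Interp C R D)} (i : Fin l.length) : l.get i ∈ l := by
  rw [List.get_eq_getElem]
  exact List.getElem_mem _

lemma mem_le_dsumList {l : List (Interp C R D)} {I : Interp C R D} (h : I ∈ l) :
    I.le (dsumList l) :=
  ⟨fun c x hx => ⟨I, h, hx⟩, fun r p hp => ⟨I, h, hp⟩⟩

lemma dsumList_le {l : List (Interp C R D)} {J : Interp C R D} (h : ∀ I ∈ l, I.le J) :
    (dsumList l).le J := by
  constructor
  · rintro c x ⟨I, hI, hx⟩
    exact (h I hI).1 c hx
  · rintro r p ⟨I, hI, hp⟩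
    exact (h I hI).2 r hp

lemma dsumOver_le_dsumList {l : List (Interp C R D)} (S : Finset (Fin l.length)) :
    (dsumOver l S).le (dsumList l) := by
  constructor
  · rintro c x ⟨i, _, hx⟩
    exact ⟨l.get i, get_mem' i, hx⟩
  · rintro r p ⟨i, _, hp⟩
    exact ⟨l.get i, get_mem' i, hp⟩

lemma dsumList_le_univ {l : List (Interp C R D)} :
    (dsumList l).le (dsumOver l Finset.univ) := by
  constructor
  · rintro c x ⟨I, hI, hx⟩
    obtain ⟨n, hn, rfl⟩ := List.mem_iff_getElem.1 hI
    exact ⟨⟨n, hn⟩, Finset.mem_univ _, hx⟩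
  · rintro r p ⟨I, hI, hp⟩
    obtain ⟨n, hn, rfl⟩ := List.mem_iff_getElem.1 hI
    exact ⟨⟨n, hn⟩, Finset.mem_univ _, hp⟩

lemma length_updAt (l : List (Interp C R D)) (i : ℕ) (f : Interp C R D → Interp C R D) :
    (updAt l i f).length = l.length :=
  List.length_mapIdx

lemma dsumList_updAt_con {l : List (Interp C R D)} {i : ℕ}
    {f : Interp C R D → Interp C R D} (hi : i < l.length) (hf : ∀ I : Interp C R D, I.le (f I)) (c : C) :
    (dsumList (updAt l i f)).con c = (dsumList l).con c ∪ (f l[i]).con c := by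
  ext y
  constructor
  · rintro ⟨I, hI, hy⟩
    obtain ⟨j, hj, rfl⟩ := List.mem_iff_getElem.1 hI
    simp only [updAt, List.getElem_mapIdx] at hy
    by_cases hji : j = i
    · subst hji
      rw [if_pos rfl] at hy
      exact Or.inr hy
    · rw [if_neg hji] at hy
      exact Or.inl ⟨_, List.getElem_mem _, hy⟩
  · have hmem : (f l[i]) ∈ updAt l i f := by
      rw [List.mem_iff_getElem]
      refine ⟨i, by rw [length_updAt]; exact hi, ?_⟩
      simp [updAt, List.getElem_mapIdx]
    rintro (⟨I, hI, hy⟩ | hy)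
    · obtain ⟨j, hj, rfl⟩ := List.mem_iff_getElem.1 hI
      by_cases hji : j = i
      · subst hji
        exact ⟨_, hmem, (hf _).1 c hy⟩
      · refine ⟨(updAt l i f)[j]'(by rw [length_updAt]; exact hj), List.getElem_mem _, ?_⟩
        simp only [updAt, List.getElem_mapIdx, if_neg hji]
        exact hy
    · exact ⟨_, hmem, hy⟩

lemma dsumList_updAt_rol {l : List (Interp C R D)} {i : ℕ}
    {f : Interp C R D → Interp C R D} (hi : i < l.length) (hf : ∀ I : Interp C R D, I.le (f I)) (r : R) :
    (dsumList (updAt l i f)).rol r = (dsumList l).rol r ∪ (f l[i]).rol r := by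
  ext q
  constructor
  · rintro ⟨I, hI, hq⟩
    obtain ⟨j, hj, rfl⟩ := List.mem_iff_getElem.1 hI
    simp only [updAt, List.getElem_mapIdx] at hq
    by_cases hji : j = i
    · subst hji
      rw [if_pos rfl] at hq
      exact Or.inr hq
    · rw [if_neg hji] at hq
      exact Or.inl ⟨_, List.getElem_mem _, hq⟩
  · have hmem : (f l[i]) ∈ updAt l i f := by
      rw [List.mem_iff_getElem]
      refine ⟨i, by rw [length_updAt]; exact hi, ?_⟩
      simp [updAt, List.getElem_mapIdx]
    rintro (⟨I, hI, hq⟩ | hq)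
    · obtain ⟨j, hj, rfl⟩ := List.mem_iff_getElem.1 hI
      by_cases hji : j = i
      · subst hji
        exact ⟨_, hmem, (hf _).2 r hq⟩
      · refine ⟨(updAt l i f)[j]'(by rw [length_updAt]; exact hj), List.getElem_mem _, ?_⟩
        simp only [updAt, List.getElem_mapIdx, if_neg hji]
        exact hq
    · exact ⟨_, hmem, hq⟩

lemma Interp.addCon_le (I : Interp C R D) (A : C) (x : D) : I.le (I.addCon A x) :=
  ⟨fun _ => Set.subset_union_left, fun _ => subset_rfl⟩

lemma Interp.addRole_le (I : Interp C R D) (ρ : RoleE R) (p : D × D) :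
    I.le (I.addRole ρ p) :=
  ⟨fun _ => subset_rfl, fun _ => Set.subset_union_left⟩

lemma Step.dsum_le {T : List (Rule C R)} {l l' : List (Interp C R D)} (h : Step T l l') :
    (dsumList l).le (dsumList l') := by
  rcases h with ⟨B, A, _, S, hS, x, _, _, _, rfl⟩ | ⟨ρ1, ρ2, _, S, hS, p, _, _, _, rfl⟩
  · constructor
    · intro c y hy
      rw [dsumList_updAt_con (S.min' hS).isLt (fun I => Interp.addCon_le I A x)]
      exact Or.inl hy
    · intro r q hq
      rw [dsumList_updAt_rol (S.min' hS).isLt (fun I => Interp.addCon_le I A x)]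
      exact Or.inl hq
  · constructor
    · intro c y hy
      rw [dsumList_updAt_con (S.min' hS).isLt (fun I => Interp.addRole_le I ρ2 p)]
      exact Or.inl hy
    · intro r q hq
      rw [dsumList_updAt_rol (S.min' hS).isLt (fun I => Interp.addRole_le I ρ2 p)]
      exact Or.inl hq

lemma Step.sound {T : List (Rule C R)} {l l' : List (Interp C R D)} {J : Interp C R D}
    (h : Step T l l') (hJ : J.modelsT T) (hle : (dsumList l).le J) :
    (dsumList l').le J := by
  rcases h with ⟨B, A, hT, S, hS, x, hx, _, _, rfl⟩ | ⟨ρ1, ρ2, hT, S, hS, p, hp, _, _, rfl⟩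
  · have hxJ : x ∈ J.con A :=
      hJ _ hT (Interp.eval_mono hle B (Interp.eval_mono (dsumOver_le_dsumList S) B hx))
    constructor
    · intro c y hy
      rw [dsumList_updAt_con (S.min' hS).isLt (fun I => Interp.addCon_le I A x)] at hy
      rcases hy with hy | hy
      · exact hle.1 c hy
      · rcases hy with hy | ⟨rfl, rfl⟩
        · exact hle.1 c ⟨_, List.getElem_mem _, hy⟩
        · exact hxJ
    · intro r q hq
      rw [dsumList_updAt_rol (S.min' hS).isLt (fun I => Interp.addCon_le I A x)] at hq
      rcases hq with hq | hq
      · exact hle.2 r hq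
      · exact hle.2 r ⟨_, List.getElem_mem _, hq⟩
  · have hpJ : p ∈ J.evalRole ρ2 :=
      hJ _ hT (Interp.evalRole_mono hle ρ1 (Interp.evalRole_mono (dsumOver_le_dsumList S) ρ1 hp))
    constructor
    · intro c y hy
      rw [dsumList_updAt_con (S.min' hS).isLt (fun I => Interp.addRole_le I ρ2 p)] at hy
      rcases hy with hy | hy
      · exact hle.1 c hy
      · exact hle.1 c ⟨_, List.getElem_mem _, hy⟩
    · intro r q hq
      rw [dsumList_updAt_rol (S.min' hS).isLt (fun I => Interp.addRole_le I ρ2 p)] at hq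
      rcases hq with hq | hq
      · exact hle.2 r hq
      · rcases hq with hq | ⟨rfl, rfl⟩
        · exact hle.2 r ⟨_, List.getElem_mem _, hq⟩
        · exact (Interp.mem_evalRole_iff J ρ2 p).1 hpJ

lemma rt_dsum_le {T : List (Rule C R)} {l l' : List (Interp C R D)}
    (h : Relation.ReflTransGen (Step T) l l') : (dsumList l).le (dsumList l') := by
  induction h with
  | refl => exact ⟨fun _ => subset_rfl, fun _ => subset_rfl⟩
  | tail _ hstep ih => exact Interp.le_trans' ih hstep.dsum_le

lemma rt_sound {T : List (Rule C R)} {l l' : List (Interp C R D)} {J : Interp C R D}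
    (h : Relation.ReflTransGen (Step T) l l') (hJ : J.modelsT T)
    (hle : (dsumList l).le J) : (dsumList l').le J := by
  induction h with
  | refl => exact hle
  | tail _ hstep ih => exact hstep.sound hJ ih

lemma dsumOver_empty_con {l : List (Interp C R D)} (c : C) :
    (dsumOver l (∅ : Finset (Fin l.length))).con c = ∅ := by
  ext y; simp [dsumOver]

lemma dsumOver_empty_rol {l : List (Interp C R D)} (r : R) :
    (dsumOver l (∅ : Finset (Fin l.length))).rol r = ∅ := by
  ext p; simp [dsumOver]

lemma saturated_conc {T : List (Rule C R)} {l : List (Interp C R D)}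
    (hsat : Saturated T l) {B : Body C R} {A : C} (hT : Rule.conc B A ∈ T) :
    (dsumList l).eval B ⊆ (dsumList l).con A := by
  intro x hx
  have hx' : x ∈ (dsumOver l Finset.univ).eval B := Interp.eval_mono dsumList_le_univ B hx
  obtain ⟨S, hSx, hminS⟩ := (Finset.wellFoundedLT.wf).has_min
    {S : Finset (Fin l.length) | x ∈ (dsumOver l S).eval B} ⟨_, hx'⟩
  have hS : S.Nonempty := by
    rcases S.eq_empty_or_nonempty with rfl | h
    · exfalso
      have hx0 : x ∈ (dsumOver l (∅ : Finset (Fin l.length))).eval B := hSx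
      rw [Interp.eval_empty (fun c => dsumOver_empty_con c) (fun r => dsumOver_empty_rol r) B] at hx0
      exact hx0
    · exact h
  by_contra hxA
  have hxc : x ∉ (l.get (S.min' hS)).con A := fun hc => hxA ⟨_, get_mem' _, hc⟩
  exact hsat ⟨_, Or.inl ⟨B, A, hT, S, hS, x, hSx,
    fun S' hS' hc => hminS S' hc hS', hxc, rfl⟩⟩

lemma saturated_rinc {T : List (Rule C R)} {l : List (Interp C R D)}
    (hsat : Saturated T l) {ρ1 ρ2 : RoleE R} (hT : Rule.rinc ρ1 ρ2 ∈ T) :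
    (dsumList l).evalRole ρ1 ⊆ (dsumList l).evalRole ρ2 := by
  intro p hp
  have hp' : p ∈ (dsumOver l Finset.univ).evalRole ρ1 :=
    Interp.evalRole_mono dsumList_le_univ ρ1 hp
  obtain ⟨S, hSp, hminS⟩ := (Finset.wellFoundedLT.wf).has_min
    {S : Finset (Fin l.length) | p ∈ (dsumOver l S).evalRole ρ1} ⟨_, hp'⟩
  have hS : S.Nonempty := by
    rcases S.eq_empty_or_nonempty with rfl | h
    · exfalso
      have hp0 : p ∈ (dsumOver l (∅ : Finset (Fin l.length))).evalRole ρ1 := hSp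
      rw [Interp.evalRole_empty (fun r => dsumOver_empty_rol r) ρ1] at hp0
      exact hp0
    · exact h
  by_contra hpA
  have hpc : p ∉ (l.get (S.min' hS)).evalRole ρ2 := fun hc => hpA
    ((Interp.evalRole_mono (mem_le_dsumList (get_mem' _)) ρ2) hc)
  exact hsat ⟨_, Or.inr ⟨ρ1, ρ2, hT, S, hS, p, hSp,
    fun S' hS' hc => hminS S' hc hS', hpc, rfl⟩⟩

end AuxLemmas

/-- the direct sum of the components of the canonical window model of
W = {A₁, ..., Aₙ} is the canonical (least) model of the window ABox ⋃ᵢ Aᵢ w.r.t. T,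
assuming the window ABox is consistent with T. -/
theorem cwm_dsum_is_canonical {C R D : Type} (T : List (Rule C R))
    (As : List (Set (Assertion C R D))) (ls : List (Interp C R D))
    (hcons : ∃ M : Interp C R D, M.modelsA {φ | ∃ A ∈ As, φ ∈ A} ∧ M.modelsT T)
    (h : IsCWM T As ls) :
    IsCanon T {φ | ∃ A ∈ As, φ ∈ A} (dsumList ls) := by
  revert hcons
  induction h with
  | nil =>
    intro _
    have hc : ∀ c, (dsumList ([] : List (Interp C R D))).con c = ∅ := by
      intro c; ext x; simp [dsumList]
    have hr : ∀ r, (dsumList ([] : List (Interp C R D))).rol r = ∅ := by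
      intro r; ext p; simp [dsumList]
    refine ⟨?_, ?_, ?_⟩
    · rintro φ ⟨A, hA, -⟩
      simp at hA
    · intro r hrT
      cases r with
      | conc B A =>
        intro x hx
        rw [Interp.eval_empty hc hr] at hx
        exact absurd hx (Set.notMem_empty x)
      | bot B => exact Interp.eval_empty hc hr B
      | rinc ρ1 ρ2 =>
        intro p hp
        rw [Interp.evalRole_empty hr] at hp
        exact absurd hp (Set.notMem_empty p)
    · intro J _ _
      refine ⟨fun c x hx => ?_, fun r p hp => ?_⟩
      · rw [hc] at hx; exact absurd hx (Set.notMem_empty x)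
      · rw [hr] at hp; exact absurd hp (Set.notMem_empty p)
  | @snoc As ls A In l' h1 h2 h3 ih =>
    intro hcons
    have hsub : ∀ {J : Interp C R D}, J.modelsA {φ | ∃ B ∈ As ++ [A], φ ∈ B} →
        J.modelsA {φ | ∃ B ∈ As, φ ∈ B} := by
      rintro J hJ φ ⟨B, hB, hφ⟩
      exact hJ φ ⟨B, List.mem_append_left _ hB, hφ⟩
    have hsubA : ∀ {J : Interp C R D}, J.modelsA {φ | ∃ B ∈ As ++ [A], φ ∈ B} →
        J.modelsA A := by
      intro J hJ φ hφ
      exact hJ φ ⟨A, List.mem_append_right _ (List.mem_singleton.2 rfl), hφ⟩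
    obtain ⟨M, hM1, hM2⟩ := hcons
    have ihc := ih ⟨M, hsub hM1, hM2⟩
    obtain ⟨rt, sat⟩ := h3
    have hls_le : (dsumList ls).le (dsumList (ls ++ [In])) :=
      dsumList_le (fun I hI => mem_le_dsumList (List.mem_append_left _ hI))
    have hIn_le : In.le (dsumList (ls ++ [In])) :=
      mem_le_dsumList (List.mem_append_right _ (List.mem_singleton.2 rfl))
    have hle_l' : (dsumList (ls ++ [In])).le (dsumList l') := rt_dsum_le rt
    have hmin : ∀ J : Interp C R D, J.modelsA {φ | ∃ B ∈ As ++ [A], φ ∈ B} →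
        J.modelsT T → (dsumList l').le J := by
      intro J hJA hJT
      refine rt_sound rt hJT (dsumList_le ?_)
      intro I hI
      rcases List.mem_append.1 hI with hI | hI
      · exact Interp.le_trans' (mem_le_dsumList hI) (ihc.2.2 J (hsub hJA) hJT)
      · rw [List.mem_singleton] at hI
        subst hI
        exact h2.2.2 J (hsubA hJA) hJT
    refine ⟨?_, ?_, hmin⟩
    · rintro φ ⟨B, hB, hφ⟩
      rcases List.mem_append.1 hB with hB | hB
      · exact Interp.satA_mono (Interp.le_trans' hls_le hle_l') (ihc.1 φ ⟨B, hB, hφ⟩)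
      · rw [List.mem_singleton] at hB
        subst hB
        exact Interp.satA_mono (Interp.le_trans' hIn_le hle_l') (h2.1 φ hφ)
    · intro r hrT
      cases r with
      | conc B A' => exact saturated_conc sat hrT
      | bot B =>
        have hM' : (dsumList l').le M := hmin M hM1 hM2
        have := Interp.eval_mono hM' B
        rw [hM2 _ hrT] at this
        exact Set.subset_empty_iff.1 this
      | rinc ρ1 ρ2 => exact saturated_rinc sat hrT
end

section
/- The ⊥-inclusion A ⊓ B ⊑ ⊥ is recursive in the TBox T = {∀R.B ⊑ B, A ⊓ B ⊑ ⊥} in the following precise sense: for every n ≥ 1, the ABox Aₙ = {A(a₀), B(aₙ)} ∪ {R(aᵢ, aᵢ₊₁) | 0 ≤ i < n} over distinct individuals a₀,...,aₙ is inconsistent with T, yet for every m < n, the standard interpretation of Aₙ does not satisfy the body of the unfolded rule A ⊓ (∀R.)ᵐ B ⊑ ⊥ at any individual (where (∀R.)ᵐ B denotes m-fold universal restriction). -/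
/-- The role assertions of the ABox Aₙ: R(aᵢ, aᵢ₊₁) for 0 ≤ i < n, with the
individuals a₀, ..., aₙ represented by the (distinct) naturals 0, ..., n. -/
def Rfact (n i j : ℕ) : Prop := j = i + 1 ∧ i < n

/-- Forward chaining of B-facts under the rule ∀R.B ⊑ B read as chain propagation:
B(aₙ) is asserted, and if B(c) and R(b,c) then B(b) is derived. -/
inductive DerB (n : ℕ) : ℕ → Prop where
  | base : DerB n n
  | step {b c : ℕ} : Rfact n b c → DerB n c → DerB n b

/-- The extension of the unfolded body (∀R.)ᵐ B in the standard interpretation of Aₙ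
(chain-propagation reading): level 0 is the asserted B-facts, level m+1 the points
with an R-successor in level m. -/
def lvl (n : ℕ) : ℕ → Set ℕ
  | 0 => {x | x = n}
  | m + 1 => {x | ∃ y, Rfact n x y ∧ y ∈ lvl n m}

/-- for every n ≥ 1, the ABox Aₙ = {A(a₀), B(aₙ)} ∪ {R(aᵢ,aᵢ₊₁)} is
inconsistent with T = {∀R.B ⊑ B, A ⊓ B ⊑ ⊥} (forward chaining derives B(a₀), and
A(a₀) is asserted), yet for every m < n, no individual satisfies the body of the
unfolded rule A ⊓ (∀R.)ᵐ B ⊑ ⊥ in the standard interpretation of Aₙ (A holds only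
at a₀ = 0). Hence A ⊓ B ⊑ ⊥ is recursive in T. -/
theorem bot_inclusion_recursive :
    ∀ n : ℕ, 1 ≤ n →
      DerB n 0 ∧ ∀ m, m < n → ∀ x : ℕ, ¬(x = 0 ∧ x ∈ lvl n m) := by
  intro n hn
  constructor
  · have key : ∀ k, k ≤ n → DerB n (n - k) := by
      intro k
      induction k with
      | zero => intro _; simpa using DerB.base
      | succ k ih =>
        intro hk
        have hk' : k ≤ n := Nat.le_of_succ_le hk
        refine DerB.step (c := n - k) ⟨?_, ?_⟩ (ih hk')
        · omega
        · omega
    simpa using key n le_rfl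
  · intro m hm x ⟨hx, hmem⟩
    subst hx
    have key : ∀ m, ∀ x : ℕ, x ∈ lvl n m → x + m = n := by
      intro m
      induction m with
      | zero => intro x hx; simpa [lvl] using hx
      | succ m ih =>
        intro x hx
        obtain ⟨y, ⟨hy, _⟩, hmem⟩ := hx
        have := ih y hmem
        omega
    have := key m 0 hmem
    omega
end
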